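/- arXiv:2412.10386 — 5 statements merged into one kernel-verified Lean document; each statement's English description precedes it below -/
import Mathlib

section
/- For every timed automaton A and every lasso-shaped run ρ of A, the language of the clock contingency automaton subsumes the language of the original automaton: L(A^{clk(ρ)}) ⊇ L(A). -/
open scoped Classical

noncomputable section

/-! ### Basic real-time machinery -/

abbrev Time := NNReal
abbrev ClockVal (X : Type) := X → Time
abbrev Guard (X : Type) := Set (ClockVal X)
abbrev ClockUpdate (X : Type) := X → Option Time

/-- Apply a (partial, constant-valued) clock update to a clock valuation. -/
def applyUpdate {X : Type} (U : ClockUpdate X) (u : ClockVal X) : ClockVal X :=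
  fun x => (U x).getD (u x)

/-- Let `δ` time units pass in the clock valuation `u`. -/
def shiftVal {X : Type} (u : ClockVal X) (δ : Time) : ClockVal X :=
  fun x => u x + δ

/-- An edge of a timed automaton: source, guard, action, clock update, target. -/
structure TAEdge (Loc Act X : Type) where
  src : Loc
  guard : Guard X
  act : Act
  upd : ClockUpdate X
  dst : Loc

/-- A timed automaton with locations `Loc`, actions `Act`, clocks `X` and
atomic propositions `AP` (guards and invariants are taken semantically,
i.e. as sets of clock valuations). -/
structure TA (Loc Act X AP : Type) where
  init : Loc
  edges : Set (TAEdge Loc Act X)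
  inv : Loc → Guard X
  lbl : Loc → Set AP

/-- An (infinite) run of a timed automaton: an alternating sequence of delay and
action transitions starting in the initial location with all clocks zero.
Transition `t` leads from state `t` to state `t + 1`, first delaying `delay t`
and then performing action `act t` (so the paper's `1`-based index `i`
corresponds to our index `i - 1`). -/
structure TARun {Loc Act X AP : Type} (A : TA Loc Act X AP) where
  loc : ℕ → Loc
  clk : ℕ → ClockVal X
  delay : ℕ → Time
  act : ℕ → Act
  init_loc : loc 0 = A.init
  init_clk : clk 0 = fun _ => 0
  step : ∀ t, ∃ e ∈ A.edges, e.src = loc t ∧ e.act = act t ∧ e.dst = loc (t + 1) ∧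
    (∀ δ' ≤ delay t, shiftVal (clk t) δ' ∈ A.inv (loc t)) ∧
    shiftVal (clk t) (delay t) ∈ e.guard ∧
    clk (t + 1) = applyUpdate e.upd (shiftVal (clk t) (delay t)) ∧
    clk (t + 1) ∈ A.inv (loc (t + 1))

/-- A lasso-shaped run: after the loop start `start`, everything repeats with
period `len - start` (where `len` is the length `|ρ|` of the lasso, i.e. the
position right after the last transition of the loop). -/
structure LassoRun {Loc Act X AP : Type} (A : TA Loc Act X AP) extends TARun A where
  start : ℕ
  len : ℕ
  start_lt : start < len
  loop_loc : ∀ t, start ≤ t → loc (t + (len - start)) = loc t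
  loop_clk : ∀ t, start ≤ t → clk (t + (len - start)) = clk t
  loop_delay : ∀ t, start ≤ t → delay (t + (len - start)) = delay t
  loop_act : ∀ t, start ≤ t → act (t + (len - start)) = act t

/-- Accumulated delay before state `i`, i.e. `δ(0, i)`. -/
def cumDelay {Loc Act X AP : Type} {A : TA Loc Act X AP} (ρ : TARun A) : ℕ → Time
  | 0 => 0
  | t + 1 => cumDelay ρ t + ρ.delay t

abbrev TASignal (AP : Type) := Time → Set AP

/-- The signal of a run: `σ^ρ(t)` is the label of the location occupied at
global time `t` (left-closed right-open semantics). -/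
def TARun.signal {Loc Act X AP : Type} {A : TA Loc Act X AP} (ρ : TARun A) : TASignal AP :=
  fun t => {p | ∃ i, cumDelay ρ i ≤ t ∧ t < cumDelay ρ (i + 1) ∧ p ∈ A.lbl (ρ.loc i)}

/-- The language of a timed automaton: the set of signals of its runs. -/
def TA.lang {Loc Act X AP : Type} (A : TA Loc Act X AP) : Set (TASignal AP) :=
  {σ | ∃ ρ : TARun A, ρ.signal = σ}

/-! ### MITL -/

/-- A non-singleton interval with natural endpoints (possibly unbounded). -/
structure TimeInterval where
  lo : ℕ
  hi : WithTop ℕ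
  lo_open : Bool
  hi_open : Bool
  nonsingleton : (lo : WithTop ℕ) < hi

def TimeInterval.mem (I : TimeInterval) (t : Time) : Prop :=
  (if I.lo_open then (I.lo : Time) < t else (I.lo : Time) ≤ t) ∧
  (match I.hi with
    | ⊤ => True
    | (b : ℕ) => if I.hi_open then t < (b : Time) else t ≤ (b : Time))

/-- Metric Interval Temporal Logic. -/
inductive MITL (AP : Type) where
  | atom : AP → MITL AP
  | not : MITL AP → MITL AP
  | and : MITL AP → MITL AP → MITL AP
  | until : TimeInterval → MITL AP → MITL AP → MITL AP

/-- Satisfaction of an MITL formula by a signal at a time point. -/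
def MITL.sat {AP : Type} (σ : TASignal AP) : MITL AP → Time → Prop
  | .atom p, t => p ∈ σ t
  | .not φ, t => ¬ MITL.sat σ φ t
  | .and φ ψ, t => MITL.sat σ φ t ∧ MITL.sat σ ψ t
  | .until I φ ψ, t => ∃ t', t < t' ∧ I.mem (t' - t) ∧ MITL.sat σ ψ t' ∧
      ∀ t'', t < t'' → t'' < t' → MITL.sat σ φ t''

/-- A run satisfies an MITL formula iff its signal does at time `0`. -/
def TARun.sat {Loc Act X AP : Type} {A : TA Loc Act X AP} (ρ : TARun A) (φ : MITL AP) : Prop :=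
  MITL.sat ρ.signal φ 0

/-- A timed automaton satisfies an MITL formula iff all of its runs do. -/
def TA.sat {Loc Act X AP : Type} (A : TA Loc Act X AP) (φ : MITL AP) : Prop :=
  ∀ ρ : TARun A, ρ.sat φ

/-! ### Networks of timed automata -/

/-- Actions of a network: the action together with the (handles of the) two
participating component automata `⟨Ai, Aj, α⟩`. -/
abbrev NetAct (n : ℕ) (Act : Type) := Fin n × Fin n × Act

def participates {n : ℕ} {Act : Type} (i : Fin n) (a : NetAct n Act) : Prop :=
  i = a.1 ∨ i = a.2.1

/-- The original component action of a network action (`bar` is the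
complementation of synchronizing actions). -/
def actionOf {n : ℕ} {Act : Type} (bar : Act → Act) (i : Fin n) (a : NetAct n Act) : Act :=
  if i = a.1 then a.2.2 else bar a.2.2

/-- The network `A1 || … || An` obtained by parallel composition, with
internal and synchronized edges. -/
def Network {n : ℕ} {Loc Act X AP : Type} (A : Fin n → TA Loc Act X AP) (bar : Act → Act) :
    TA (Fin n → Loc) (NetAct n Act) X AP where
  init := fun i => (A i).init
  inv := fun q => {u | ∀ i, u ∈ (A i).inv (q i)}
  lbl := fun q => {p | ∃ i, p ∈ (A i).lbl (q i)}
  edges := {e |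
    (∃ i, ∃ e' ∈ (A i).edges, e.act = (i, i, e'.act) ∧
      e.guard = e'.guard ∧ e.upd = e'.upd ∧
      e.src i = e'.src ∧ e.dst i = e'.dst ∧ ∀ j, j ≠ i → e.dst j = e.src j) ∨
    (∃ i j, i ≠ j ∧ ∃ ei ∈ (A i).edges, ∃ ej ∈ (A j).edges,
      ej.act = bar ei.act ∧ e.act = (i, j, ei.act) ∧
      e.guard = ei.guard ∩ ej.guard ∧
      e.upd = (fun x => (ei.upd x).orElse fun _ => ej.upd x) ∧
      e.src i = ei.src ∧ e.src j = ej.src ∧ e.dst i = ei.dst ∧ e.dst j = ej.dst ∧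
      ∀ k, k ≠ i → k ≠ j → e.dst k = e.src k)}

/-! ### Local projections -/

/-- A (possibly finite) trace: a sequence of pairs of delays and actions. -/
abbrev TATrace (Act : Type) := ℕ → Option (Time × Act)

/-- `HasNth p k` says that the set `{t | p t}` has at least `k + 1` elements. -/
def HasNth (p : ℕ → Prop) (k : ℕ) : Prop :=
  {t | p t}.Infinite ∨ k < {t | p t}.ncard

/-- The local projection `ρ(Ai)` of a network run: the `k`-th action is the
component's own action at its `k`-th event point and the `k`-th delay is the
cumulative global delay since the previous event point of the component. -/
def localProj {n : ℕ} {L X AP Act : Type} {N : TA L (NetAct n Act) X AP} (bar : Act → Act)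
    (ρ : TARun N) (i : Fin n) : TATrace Act :=
  fun k =>
    let p : ℕ → Prop := fun t => participates i (ρ.act t)
    if HasNth p k then
      some (Prod.mk
        (∑ t ∈ Finset.Icc (if k = 0 then 0 else Nat.nth p (k - 1) + 1) (Nat.nth p k), ρ.delay t)
        (actionOf bar i (ρ.act (Nat.nth p k))))
    else none

/-- `localize(ρ, A^n)`: the tuple of all local projections. -/
def localize {n : ℕ} {L X AP Act : Type} {N : TA L (NetAct n Act) X AP} (bar : Act → Act)
    (ρ : TARun N) : Fin n → TATrace Act :=
  fun i => localProj bar ρ i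

/-- The sequence `locations(ρ, Ai)` of local locations of component `i`. -/
def locSeq {n : ℕ} {Loc X AP Act : Type} {N : TA (Fin n → Loc) (NetAct n Act) X AP}
    (ρ : TARun N) (i : Fin n) : ℕ → Loc :=
  fun k =>
    if k = 0 then ρ.loc 0 i
    else ρ.loc (Nat.nth (fun t => participates i (ρ.act t)) (k - 1) + 1) i

/-- The length `|ρ(Ai)|` of the local projection of a lasso-shaped run: the
number of event points of component `i` among the first `|ρ|` transitions. -/
def localLen {n : ℕ} {L X AP Act : Type} {N : TA L (NetAct n Act) X AP}
    (ρ : LassoRun N) (i : Fin n) : ℕ :=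
  ((Finset.range ρ.len).filter fun t => participates i (ρ.act t)).card

/-- The local loop start of the projection of a lasso-shaped run. -/
def localStart {n : ℕ} {L X AP Act : Type} {N : TA L (NetAct n Act) X AP}
    (ρ : LassoRun N) (i : Fin n) : ℕ :=
  ((Finset.range ρ.start).filter fun t => participates i (ρ.act t)).card

/-! ### Events -/

/-- An event is a delay event `(δ, i)` or an action event `(α, i)`
(indices are `1`-based, as in the paper). -/
abbrev TAEvent (Act : Type) := (Time ⊕ Act) × ℕ

/-- Events of a network: an event together with the component it refers to. -/
abbrev NetEvent (n : ℕ) (Act : Type) := TAEvent Act × Fin n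

/-- The events of a (lasso-shaped) trace, restricted to positions `1, …, len`. -/
def traceEvents {Act : Type} (π : TATrace Act) (len : ℕ) : Set (TAEvent Act) :=
  {ev | ∃ k < len, ∃ δ a, π k = some (δ, a) ∧ (ev = (Sum.inl δ, k + 1) ∨ ev = (Sum.inr a, k + 1))}

/-- `E_ρ`: the events on a lasso-shaped run of a network. -/
def runEvents {n : ℕ} {L X AP Act : Type} {N : TA L (NetAct n Act) X AP} (bar : Act → Act)
    (ρ : LassoRun N) : Set (NetEvent n Act) :=
  {ev | ev.1 ∈ traceEvents (localProj bar ρ.toTARun ev.2) (localLen ρ ev.2)}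

/-- `C|k`: the events of component `k` in a set of network events. -/
def restrictC {n : ℕ} {Act : Type} (C : Set (NetEvent n Act)) (i : Fin n) :
    Set (TAEvent Act) :=
  {e | (e, i) ∈ C}

/-! ### Counterfactual trace automata and contingency automata -/

/-- `dst` for (0-based) lasso positions: the successor position in the lasso. -/
def dstIdx (start len j : ℕ) : ℕ := if j + 1 < len then j + 1 else start

/-- The counterfactual trace automaton `A^C_π` of a lasso-shaped trace `π`
(with loop start `start` and length `len`) for the set of events `C`; `d` is
its (fresh) clock within the clock type `X`. -/
def CTA {Act X : Type} (AP : Type) (π : TATrace Act) (C : Set (TAEvent Act))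
    (start len : ℕ) (d : X) : TA ℕ Act X AP where
  init := 0
  lbl := fun _ => ∅
  inv := fun q => {u | ∀ δ a, q < len → π q = some (δ, a) → (Sum.inl δ, q + 1) ∉ C → u d ≤ δ}
  edges := {e | ∃ j < len, ∃ δ a, π j = some (δ, a) ∧
    e.src = j ∧ e.dst = dstIdx start len j ∧
    e.upd = (fun x => if x = d then some 0 else none) ∧
    (((Sum.inl δ, j + 1) ∈ C ∧ e.guard = Set.univ) ∨
      ((Sum.inl δ, j + 1) ∉ C ∧ e.guard = {u | u d = δ})) ∧
    ((Sum.inr a, j + 1) ∈ C ∨ e.act = a)}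

/-- Lift a timed automaton over clocks `X` to the larger clock set `X ⊕ K`. -/
def liftTA {Loc Act X AP : Type} (A : TA Loc Act X AP) (K : Type) :
    TA Loc Act (X ⊕ K) AP where
  init := A.init
  inv := fun q => {u | (fun x => u (Sum.inl x)) ∈ A.inv q}
  lbl := A.lbl
  edges := {e | ∃ e' ∈ A.edges, e.src = e'.src ∧ e.dst = e'.dst ∧ e.act = e'.act ∧
    e.guard = {u | (fun x => u (Sum.inl x)) ∈ e'.guard} ∧
    e.upd = fun x => match x with | Sum.inl y => e'.upd y | Sum.inr _ => none}

/-- Intersection of two timed automata over the same clocks and actions,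
synchronizing on actions; the labels are taken from the first operand. -/
def interS {L1 L2 Act X AP AP2 : Type} (A : TA L1 Act X AP) (B : TA L2 Act X AP2) :
    TA (L1 × L2) Act X AP where
  init := (A.init, B.init)
  inv := fun q => A.inv q.1 ∩ B.inv q.2
  lbl := fun q => A.lbl q.1
  edges := {e | ∃ ea ∈ A.edges, ∃ eb ∈ B.edges, ea.act = e.act ∧ eb.act = e.act ∧
    e.src = (ea.src, eb.src) ∧ e.dst = (ea.dst, eb.dst) ∧
    e.guard = ea.guard ∩ eb.guard ∧
    e.upd = fun x => (ea.upd x).orElse fun _ => eb.upd x}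

/-- The location contingency automaton of an automaton, given the sequence of
locations of the original run and the (local) loop data. -/
def locContingency {Loc Act X AP : Type} (A : TA Loc Act X AP) (seq : ℕ → Loc)
    (start len : ℕ) : TA (Loc × ℕ) Act X AP where
  init := (A.init, 0)
  inv := fun q => A.inv q.1
  lbl := fun q => A.lbl q.1
  edges := {e | ∃ e' ∈ A.edges, ∃ j < len, e.src = (e'.src, j) ∧
    e.guard = e'.guard ∧ e.act = e'.act ∧ e.upd = e'.upd ∧
    (e.dst = (e'.dst, dstIdx start len j) ∨
      e.dst = (seq (dstIdx start len j), dstIdx start len j))}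

/-- The clock contingency automaton of an automaton, given the clock resets
corresponding to the original run and the loop data. -/
def clkContingency {Loc Act X AP : Type} (A : TA Loc Act X AP) (reset : ℕ → ClockUpdate X)
    (start len : ℕ) : TA (Loc × ℕ) Act X AP where
  init := (A.init, 0)
  inv := fun q => A.inv q.1
  lbl := fun q => A.lbl q.1
  edges := {e | ∃ e' ∈ A.edges, ∃ j < len, e.src = (e'.src, j) ∧
    e.guard = e'.guard ∧ e.act = e'.act ∧ e.dst = (e'.dst, dstIdx start len j) ∧
    (e.upd = e'.upd ∨ e.upd = reset (dstIdx start len j))}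

/-! ### Counterfactual networks and causes -/

/-- The counterfactual network
`(A1 ∩ A^{C|1}_{ρ(A1)}) || … || (An ∩ A^{C|n}_{ρ(An)})`, where each
counterfactual trace automaton gets its own fresh clock `Sum.inr i`. -/
def cfNetwork {n : ℕ} {Loc Act X AP : Type} (A : Fin n → TA Loc Act X AP) (bar : Act → Act)
    (ρ : LassoRun (Network A bar)) (C : Set (NetEvent n Act)) :
    TA (Fin n → Loc × ℕ) (NetAct n Act) (X ⊕ Fin n) AP :=
  Network (fun i =>
    interS (liftTA (A i) (Fin n))
      (CTA AP (localProj bar ρ.toTARun i) (restrictC C i)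
        (localStart ρ i) (localLen ρ i) (Sum.inr i))) bar

/-- The counterfactual network with contingencies
`((A1^{loc(ρ)} ∩ A^{C|1}_{ρ(A1)}) || … || (An^{loc(ρ)} ∩ A^{C|n}_{ρ(An)}))^{clk(ρ)}`. -/
def cfActNetwork {n : ℕ} {Loc Act X AP : Type} (A : Fin n → TA Loc Act X AP) (bar : Act → Act)
    (ρ : LassoRun (Network A bar)) (C : Set (NetEvent n Act)) :
    TA ((Fin n → (Loc × ℕ) × ℕ) × ℕ) (NetAct n Act) (X ⊕ Fin n) AP :=
  clkContingency
    (Network (fun i =>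
      interS
        (liftTA (locContingency (A i) (locSeq ρ.toTARun i) (localStart ρ i) (localLen ρ i))
          (Fin n))
        (CTA AP (localProj bar ρ.toTARun i) (restrictC C i)
          (localStart ρ i) (localLen ρ i) (Sum.inr i))) bar)
    (fun j x => match x with | Sum.inl y => some (ρ.clk j y) | Sum.inr _ => none)
    ρ.start ρ.len

/-- `SAT`: cause and effect are satisfied by the actual run. -/
def SATcond {n : ℕ} {Loc Act X AP : Type} {A : Fin n → TA Loc Act X AP} (bar : Act → Act)
    (ρ : LassoRun (Network A bar)) (φ : MITL AP) (C : Set (NetEvent n Act)) : Prop :=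
  C ⊆ runEvents bar ρ ∧ ρ.toTARun.sat φ

/-- `CF_BF`: some intervention on the events in `C` avoids the effect. -/
def CFBF {n : ℕ} {Loc Act X AP : Type} (A : Fin n → TA Loc Act X AP) (bar : Act → Act)
    (ρ : LassoRun (Network A bar)) (φ : MITL AP) (C : Set (NetEvent n Act)) : Prop :=
  ¬ (cfNetwork A bar ρ C).sat φ

/-- `CF_Act`: some intervention together with location and clock contingencies
avoids the effect. -/
def CFAct {n : ℕ} {Loc Act X AP : Type} (A : Fin n → TA Loc Act X AP) (bar : Act → Act)
    (ρ : LassoRun (Network A bar)) (φ : MITL AP) (C : Set (NetEvent n Act)) : Prop :=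
  ¬ (cfActNetwork A bar ρ C).sat φ

/-- But-for cause: a finite set of events satisfying SAT, CF_BF and MIN. -/
def IsButForCause {n : ℕ} {Loc Act X AP : Type} (A : Fin n → TA Loc Act X AP) (bar : Act → Act)
    (ρ : LassoRun (Network A bar)) (φ : MITL AP) (C : Set (NetEvent n Act)) : Prop :=
  C.Finite ∧ SATcond bar ρ φ C ∧ CFBF A bar ρ φ C ∧
    ∀ C' ⊂ C, ¬ (SATcond bar ρ φ C' ∧ CFBF A bar ρ φ C')

/-- Actual cause: a finite set of events satisfying SAT, CF_Act and MIN. -/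
def IsActualCause {n : ℕ} {Loc Act X AP : Type} (A : Fin n → TA Loc Act X AP) (bar : Act → Act)
    (ρ : LassoRun (Network A bar)) (φ : MITL AP) (C : Set (NetEvent n Act)) : Prop :=
  C.Finite ∧ SATcond bar ρ φ C ∧ CFAct A bar ρ φ C ∧
    ∀ C' ⊂ C, ¬ (SATcond bar ρ φ C' ∧ CFAct A bar ρ φ C')

end

/-- Iterated lasso index. -/
def lassoIdx (start len : ℕ) : ℕ → ℕ
  | 0 => 0
  | t + 1 => dstIdx start len (lassoIdx start len t)

lemma lassoIdx_lt {start len : ℕ} (h : start < len) : ∀ t, lassoIdx start len t < len := by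
  intro t
  induction t with
  | zero => exact Nat.lt_of_le_of_lt (Nat.zero_le _) h
  | succ t _ =>
    simp only [lassoIdx, dstIdx]
    split
    · assumption
    · exact h

lemma signal_eq_of_eq {Loc1 Act1 X1 AP Loc2 Act2 X2 : Type}
    {A : TA Loc1 Act1 X1 AP} {B : TA Loc2 Act2 X2 AP}
    (r : TARun A) (s : TARun B) (hd : s.delay = r.delay)
    (hl : ∀ i, B.lbl (s.loc i) = A.lbl (r.loc i)) : s.signal = r.signal := by
  have hcd : cumDelay s = cumDelay r := by
    funext t
    induction t with
    | zero => rfl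
    | succ t ih => simp [cumDelay, ih, hd]
  funext t
  simp [TARun.signal, hcd, hl]

lemma cumDelay_eq_of_delay_eq {Loc1 Act1 X1 AP1 Loc2 Act2 X2 AP2 : Type}
    {A : TA Loc1 Act1 X1 AP1} {B : TA Loc2 Act2 X2 AP2}
    (r : TARun A) (s : TARun B) (h : s.delay = r.delay) : cumDelay s = cumDelay r := by
  funext t
  induction t with
  | zero => rfl
  | succ t ih => simp [cumDelay, ih, h]

/-- the language of the clock contingency automaton subsumes the
language of the original automaton: `L(A^{clk(ρ)}) ⊇ L(A)`. -/
theorem clkContingency_lang_superset {Loc Act X AP : Type}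
    [Finite Loc] [Finite Act] [Finite X] [Finite AP]
    (A : TA Loc Act X AP) (ρ : LassoRun A) :
    A.lang ⊆ (clkContingency A (fun j x => some (ρ.clk j x)) ρ.start ρ.len).lang := by
  rintro σ ⟨r, rfl⟩
  set B := clkContingency A (fun j x => some (ρ.clk j x)) ρ.start ρ.len with hB
  refine ⟨{ loc := fun t => (r.loc t, lassoIdx ρ.start ρ.len t)
            clk := r.clk
            delay := r.delay
            act := r.act
            init_loc := by simp [r.init_loc, lassoIdx, hB, clkContingency]
            init_clk := r.init_clk
            step := ?_ }, ?_⟩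
  · intro t
    obtain ⟨e, he, hsrc, hact, hdst, hinv, hg, hclk, hinv'⟩ := r.step t
    refine ⟨⟨(e.src, lassoIdx ρ.start ρ.len t), e.guard, e.act, e.upd,
      (e.dst, dstIdx ρ.start ρ.len (lassoIdx ρ.start ρ.len t))⟩,
      ⟨e, he, lassoIdx ρ.start ρ.len t, lassoIdx_lt ρ.start_lt t, rfl, rfl, rfl, rfl,
        Or.inl rfl⟩, ?_, hact, ?_, hinv, hg, hclk, hinv'⟩
    · simp [hsrc]
    · simp [lassoIdx, hdst]
  · exact signal_eq_of_eq r _ rfl fun i => rfl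
end

section
/- Cause monotonicity for CF_BF: for every network of timed automata A^n, lasso-shaped run ρ, and MITL effect φ, if a finite set of events C ⊆ E(A^n) fulfills CF_BF, then every finite superset C' ⊇ C with C' ⊆ E(A^n) fulfills CF_BF. -/
open scoped Classical

section CFBFMono

lemma CTA_inv_mono {Act X : Type} (AP : Type) (π : TATrace Act)
    {C C' : Set (TAEvent Act)} (hsub : C ⊆ C') (s l : ℕ) (d : X) (q : ℕ) :
    (CTA AP π C s l d).inv q ⊆ (CTA AP π C' s l d).inv q := by
  intro u hu δ a hq hπ hC'
  exact hu δ a hq hπ (fun hc => hC' (hsub hc))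

lemma CTA_edge_mono {Act X : Type} (AP : Type) (π : TATrace Act)
    {C C' : Set (TAEvent Act)} (hsub : C ⊆ C') (s l : ℕ) (d : X)
    {e : TAEdge ℕ Act X} (he : e ∈ (CTA AP π C s l d).edges)
    {u : ClockVal X} (hu : u ∈ e.guard) :
    ∃ e2 ∈ (CTA AP π C' s l d).edges, e2.src = e.src ∧ e2.dst = e.dst ∧
      e2.act = e.act ∧ e2.upd = e.upd ∧ u ∈ e2.guard := by
  obtain ⟨j, hj, δ, a, hπ, hsrc, hdst, hupd, hg, hact⟩ := he
  refine ⟨{ e with guard := if (Sum.inl δ, j+1) ∈ C' then Set.univ else {v | v d = δ} },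
    ⟨j, hj, δ, a, hπ, hsrc, hdst, hupd, ?_, ?_⟩, rfl, rfl, rfl, rfl, ?_⟩
  · by_cases hm : (Sum.inl δ, j+1) ∈ C'
    · exact Or.inl ⟨hm, by simp [hm]⟩
    · exact Or.inr ⟨hm, by simp [hm]⟩
  · rcases hact with h1 | h1
    · exact Or.inl (hsub h1)
    · exact Or.inr h1
  · by_cases hm : (Sum.inl δ, j+1) ∈ C'
    · simp [hm]
    · simp only [hm, if_false]
      rcases hg with ⟨hc, _⟩ | ⟨_, hgeq⟩
      · exact absurd (hsub hc) hm
      · rw [hgeq] at hu; exact hu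

lemma interS_edge_mono {L1 L2 Act X AP AP2 : Type}
    (A : TA L1 Act X AP) {B B' : TA L2 Act X AP2}
    (hedge : ∀ e ∈ B.edges, ∀ u ∈ e.guard, ∃ e2 ∈ B'.edges,
      e2.src = e.src ∧ e2.dst = e.dst ∧ e2.act = e.act ∧ e2.upd = e.upd ∧ u ∈ e2.guard) :
    ∀ e ∈ (interS A B).edges, ∀ u ∈ e.guard, ∃ e2 ∈ (interS A B').edges,
      e2.src = e.src ∧ e2.dst = e.dst ∧ e2.act = e.act ∧ e2.upd = e.upd ∧ u ∈ e2.guard := by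
  rintro e ⟨ea, hea, eb, heb, haa, hba, hsrc, hdst, hg, hupd⟩ u hu
  rw [hg] at hu
  obtain ⟨eb2, heb2, hs2, hd2, ha2, hup2, hu2⟩ := hedge eb heb u hu.2
  refine ⟨{ e with guard := ea.guard ∩ eb2.guard },
    ⟨ea, hea, eb2, heb2, haa, by rw [ha2]; exact hba, by rw [hs2]; exact hsrc,
      by rw [hd2]; exact hdst, rfl, by rw [hup2]; exact hupd⟩,
    rfl, rfl, rfl, rfl, ⟨hu.1, hu2⟩⟩

lemma Network_edge_mono {n : ℕ} {Loc Act X AP : Type}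
    {B B' : Fin n → TA Loc Act X AP} (bar : Act → Act)
    (hedge : ∀ i, ∀ e ∈ (B i).edges, ∀ u ∈ e.guard, ∃ e2 ∈ (B' i).edges,
      e2.src = e.src ∧ e2.dst = e.dst ∧ e2.act = e.act ∧ e2.upd = e.upd ∧ u ∈ e2.guard) :
    ∀ e ∈ (Network B bar).edges, ∀ u ∈ e.guard, ∃ e2 ∈ (Network B' bar).edges,
      e2.src = e.src ∧ e2.dst = e.dst ∧ e2.act = e.act ∧ e2.upd = e.upd ∧ u ∈ e2.guard := by
  rintro e (⟨i, e', he', hact, hg, hupd, hsi, hdi, hrest⟩ |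
    ⟨i, j, hij, ei, hei, ej, hej, hbar, hact, hg, hupd, hsi, hsj, hdi, hdj, hrest⟩) u hu
  · obtain ⟨e2, he2, hs2, hd2, ha2, hup2, hu2⟩ := hedge i e' he' u (by rw [hg] at hu; exact hu)
    refine ⟨{ e with guard := e2.guard }, Or.inl ⟨i, e2, he2, by rw [ha2]; exact hact, rfl,
      by rw [hup2]; exact hupd, by rw [hs2]; exact hsi, by rw [hd2]; exact hdi, hrest⟩,
      rfl, rfl, rfl, rfl, hu2⟩
  · rw [hg] at hu
    obtain ⟨ei2, hei2, hsi2, hdi2, hai2, hupi2, hui2⟩ := hedge i ei hei u hu.1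
    obtain ⟨ej2, hej2, hsj2, hdj2, haj2, hupj2, huj2⟩ := hedge j ej hej u hu.2
    refine ⟨{ e with guard := ei2.guard ∩ ej2.guard }, Or.inr ⟨i, j, hij, ei2, hei2, ej2, hej2,
      by rw [haj2, hai2]; exact hbar, by rw [hai2]; exact hact, rfl,
      by rw [hupi2, hupj2]; exact hupd, by rw [hsi2]; exact hsi, by rw [hsj2]; exact hsj,
      by rw [hdi2]; exact hdi, by rw [hdj2]; exact hdj, hrest⟩,
      rfl, rfl, rfl, rfl, ⟨hui2, huj2⟩⟩

end CFBFMono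

/-- cause monotonicity for CF_BF: if a finite `C` fulfills CF_BF,
then so does every finite superset `C' ⊇ C`. -/
theorem CFBF_monotone {n : ℕ} {Loc Act X AP : Type}
    [Finite Loc] [Finite Act] [Finite X] [Finite AP]
    (A : Fin n → TA Loc Act X AP) (bar : Act → Act)
    (ρ : LassoRun (Network A bar)) (φ : MITL AP)
    (C C' : Set (NetEvent n Act)) (hC : C.Finite) (hC' : C'.Finite)
    (hsub : C ⊆ C') (h : CFBF A bar ρ φ C) :
    CFBF A bar ρ φ C' := by
  intro hall
  apply h
  intro ρ0
  -- transfer edges and invariants from the `C`-network to the `C'`-network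
  have hedge : ∀ e ∈ (cfNetwork A bar ρ C).edges, ∀ u ∈ e.guard,
      ∃ e2 ∈ (cfNetwork A bar ρ C').edges, e2.src = e.src ∧ e2.dst = e.dst ∧
        e2.act = e.act ∧ e2.upd = e.upd ∧ u ∈ e2.guard := by
    refine Network_edge_mono bar (fun i => interS_edge_mono _ (fun e he u hu => ?_))
    exact CTA_edge_mono AP _ (fun ev hev => hsub hev) _ _ _ he hu
  have hinv : ∀ q, (cfNetwork A bar ρ C).inv q ⊆ (cfNetwork A bar ρ C').inv q := by
    intro q u hu i
    exact ⟨(hu i).1, CTA_inv_mono AP _ (fun ev hev => hsub hev) _ _ _ _ (hu i).2⟩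
  -- build the corresponding run of the `C'`-network
  let ρ1 : TARun (cfNetwork A bar ρ C') :=
    { loc := ρ0.loc, clk := ρ0.clk, delay := ρ0.delay, act := ρ0.act
      init_loc := ρ0.init_loc
      init_clk := ρ0.init_clk
      step := by
        intro t
        obtain ⟨e, he, hsrc, hact, hdst, hinvd, hguard, hclk, hinv2⟩ := ρ0.step t
        obtain ⟨e2, he2, hs2, hd2, ha2, hup2, hu2⟩ := hedge e he _ hguard
        exact ⟨e2, he2, by rw [hs2]; exact hsrc, by rw [ha2]; exact hact,
          by rw [hd2]; exact hdst, fun δ' hδ' => hinv _ (hinvd δ' hδ'), hu2,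
          by rw [hup2]; exact hclk, hinv _ hinv2⟩ }
  have hcum : ∀ i, cumDelay ρ1 i = cumDelay ρ0 i := by
    intro i
    induction i with
    | zero => rfl
    | succ k ih => simp only [cumDelay, ih]; rfl
  have hsig : ρ1.signal = ρ0.signal := by
    funext t
    ext p
    simp only [TARun.signal, Set.mem_setOf_eq, hcum]
    rfl
  have := hall ρ1
  unfold TARun.sat at this ⊢
  rw [← hsig]
  exact this
end

section
/- Cause monotonicity for CF_Act: for every network of timed automata A^n, lasso-shaped run ρ, and MITL effect φ, if a finite set of events C ⊆ E(A^n) fulfills CF_Act, then every finite superset C' ⊇ C with C' ⊆ E(A^n) fulfills CF_Act. -/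
open scoped Classical

section AuxMono

/-- Edge-wise simulation: every edge of `A` whose guard holds for `u` can be
mimicked by an edge of `B` with the same source/action/target/update whose
guard also holds for `u`. -/
def EdgeTransfer {Loc Act X AP : Type} (A B : TA Loc Act X AP) : Prop :=
  ∀ e ∈ A.edges, ∀ u ∈ e.guard, ∃ e' ∈ B.edges,
    e'.src = e.src ∧ e'.act = e.act ∧ e'.dst = e.dst ∧ e'.upd = e.upd ∧ u ∈ e'.guard

lemma cta_transfer {Act X : Type} (AP : Type) (π : TATrace Act) {C C' : Set (TAEvent Act)}
    (hsub : C ⊆ C') (start len : ℕ) (d : X) :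
    EdgeTransfer (CTA AP π C start len d) (CTA AP π C' start len d) := by
  rintro e ⟨j, hj, δ, a, hπ, hsrc, hdst, hupd, hg, hact⟩ u hu
  have hact' : (Sum.inr a, j + 1) ∈ C' ∨ e.act = a := by
    rcases hact with h | h
    · exact Or.inl (hsub h)
    · exact Or.inr h
  by_cases hmem : (Sum.inl δ, j + 1) ∈ C'
  · exact ⟨{ e with guard := Set.univ },
      ⟨j, hj, δ, a, hπ, hsrc, hdst, hupd, Or.inl ⟨hmem, rfl⟩, hact'⟩,
      rfl, rfl, rfl, rfl, trivial⟩
  · have hnC : (Sum.inl δ, j + 1) ∉ C := fun hc => hmem (hsub hc)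
    rcases hg with ⟨h1, _⟩ | ⟨_, hg⟩
    · exact absurd h1 hnC
    · exact ⟨e, ⟨j, hj, δ, a, hπ, hsrc, hdst, hupd, Or.inr ⟨hmem, hg⟩, hact'⟩,
        rfl, rfl, rfl, rfl, hu⟩

lemma interS_transfer {L1 L2 Act X AP AP2 : Type} (A : TA L1 Act X AP)
    {B B' : TA L2 Act X AP2} (h : EdgeTransfer B B') :
    EdgeTransfer (interS A B) (interS A B') := by
  rintro e ⟨ea, hea, eb, heb, haa, hba, hsrc, hdst, hg, hupd⟩ u hu
  have hu' : u ∈ ea.guard ∩ eb.guard := hg ▸ hu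
  obtain ⟨eb', heb', h1, h2, h3, h4, h5⟩ := h eb heb u hu'.2
  refine ⟨{ e with guard := ea.guard ∩ eb'.guard },
    ⟨ea, hea, eb', heb', haa, ?_, ?_, ?_, rfl, ?_⟩, rfl, rfl, rfl, rfl, ⟨hu'.1, h5⟩⟩
  · rw [h2]; exact hba
  · show e.src = _; rw [h1]; exact hsrc
  · show e.dst = _; rw [h3]; exact hdst
  · show e.upd = _; simp only [h4]; exact hupd

lemma network_transfer {n : ℕ} {Loc Act X AP : Type} {A B : Fin n → TA Loc Act X AP}
    (bar : Act → Act) (h : ∀ i, EdgeTransfer (A i) (B i)) :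
    EdgeTransfer (Network A bar) (Network B bar) := by
  rintro e he u hu
  rcases he with ⟨i, ei, hei, hact, hg, hupd, hsrci, hdsti, hrest⟩ |
    ⟨i, j, hij, ei, hei, ej, hej, hbar, hact, hg, hupd, hsi, hsj, hdi, hdj, hrest⟩
  · obtain ⟨ei', hei', h1, h2, h3, h4, h5⟩ := h i ei hei u (hg ▸ hu)
    refine ⟨{ e with guard := ei'.guard },
      Or.inl ⟨i, ei', hei', ?_, rfl, ?_, ?_, ?_, hrest⟩, rfl, rfl, rfl, rfl, h5⟩
    · show e.act = _; rw [h2]; exact hact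
    · show e.upd = _; rw [h4]; exact hupd
    · show e.src i = _; rw [h1]; exact hsrci
    · show e.dst i = _; rw [h3]; exact hdsti
  · have hu' : u ∈ ei.guard ∩ ej.guard := hg ▸ hu
    obtain ⟨ei', hei', hi1, hi2, hi3, hi4, hi5⟩ := h i ei hei u hu'.1
    obtain ⟨ej', hej', hj1, hj2, hj3, hj4, hj5⟩ := h j ej hej u hu'.2
    refine ⟨{ e with guard := ei'.guard ∩ ej'.guard },
      Or.inr ⟨i, j, hij, ei', hei', ej', hej', ?_, ?_, rfl, ?_, ?_, ?_, ?_, ?_, hrest⟩,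
      rfl, rfl, rfl, rfl, ⟨hi5, hj5⟩⟩
    · rw [hj2, hi2]; exact hbar
    · show e.act = _; rw [hi2]; exact hact
    · show e.upd = _; simp only [hi4, hj4]; exact hupd
    · show e.src i = _; rw [hi1]; exact hsi
    · show e.src j = _; rw [hj1]; exact hsj
    · show e.dst i = _; rw [hi3]; exact hdi
    · show e.dst j = _; rw [hj3]; exact hdj

lemma clkCont_transfer {Loc Act X AP : Type} {A B : TA Loc Act X AP}
    (reset : ℕ → ClockUpdate X) (start len : ℕ) (h : EdgeTransfer A B) :
    EdgeTransfer (clkContingency A reset start len) (clkContingency B reset start len) := by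
  rintro e ⟨e', he', j, hj, hsrc, hg, hact, hdst, hupd⟩ u hu
  obtain ⟨e'', he'', h1, h2, h3, h4, h5⟩ := h e' he' u (hg ▸ hu)
  refine ⟨{ e with guard := e''.guard },
    ⟨e'', he'', j, hj, ?_, rfl, ?_, ?_, ?_⟩, rfl, rfl, rfl, rfl, h5⟩
  · show e.src = _; rw [h1]; exact hsrc
  · show e.act = _; rw [h2]; exact hact
  · show e.dst = _; rw [h3]; exact hdst
  · show e.upd = _ ∨ e.upd = _
    rcases hupd with hh | hh
    · exact Or.inl (hh.trans h4.symm)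
    · exact Or.inr hh

lemma cumDelay_congr {Loc Act X AP : Type} {A B : TA Loc Act X AP} (ρ : TARun A) (ρ' : TARun B)
    (h : ρ'.delay = ρ.delay) : ∀ i, cumDelay ρ' i = cumDelay ρ i := by
  intro i
  induction i with
  | zero => rfl
  | succ k ih => simp [cumDelay, ih, h]

lemma not_sat_transfer {Loc Act X AP : Type} {A B : TA Loc Act X AP} (φ : MITL AP)
    (hinit : B.init = A.init) (hlbl : B.lbl = A.lbl)
    (hinv : ∀ q, A.inv q ⊆ B.inv q)
    (hedge : EdgeTransfer A B) (h : ¬ A.sat φ) : ¬ B.sat φ := by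
  rw [TA.sat] at h
  push_neg at h
  obtain ⟨σ, hσ⟩ := h
  intro hB
  apply hσ
  have hstep : ∀ t, ∃ e ∈ B.edges, e.src = σ.loc t ∧ e.act = σ.act t ∧ e.dst = σ.loc (t + 1) ∧
      (∀ δ' ≤ σ.delay t, shiftVal (σ.clk t) δ' ∈ B.inv (σ.loc t)) ∧
      shiftVal (σ.clk t) (σ.delay t) ∈ e.guard ∧
      σ.clk (t + 1) = applyUpdate e.upd (shiftVal (σ.clk t) (σ.delay t)) ∧
      σ.clk (t + 1) ∈ B.inv (σ.loc (t + 1)) := by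
    intro t
    obtain ⟨e, he, h1, h2, h3, h4, h5, h6, h7⟩ := σ.step t
    obtain ⟨e', he', g1, g2, g3, g4, g5⟩ := hedge e he _ h5
    exact ⟨e', he', g1.trans h1, g2.trans h2, g3.trans h3,
      fun δ' hδ => hinv _ (h4 δ' hδ), g5, by rw [g4]; exact h6, hinv _ h7⟩
  let σ' : TARun B := ⟨σ.loc, σ.clk, σ.delay, σ.act, by rw [σ.init_loc, hinit], σ.init_clk, hstep⟩
  have hcd : ∀ i, cumDelay σ i = cumDelay σ' i := fun i => (cumDelay_congr σ σ' rfl i).symm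
  have hsig : σ'.signal = σ.signal := by
    funext t
    ext p
    simp only [TARun.signal, Set.mem_setOf_eq, hcd, hlbl]
    rfl
  show MITL.sat σ.signal φ 0
  rw [← hsig]
  exact hB σ'

end AuxMono

/-- cause monotonicity for CF_Act: if a finite `C` fulfills
CF_Act, then so does every finite superset `C' ⊇ C`. -/
theorem CFAct_monotone {n : ℕ} {Loc Act X AP : Type}
    [Finite Loc] [Finite Act] [Finite X] [Finite AP]
    (A : Fin n → TA Loc Act X AP) (bar : Act → Act)
    (ρ : LassoRun (Network A bar)) (φ : MITL AP)
    (C C' : Set (NetEvent n Act)) (hC : C.Finite) (hC' : C'.Finite)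
    (hsub : C ⊆ C') (h : CFAct A bar ρ φ C) :
    CFAct A bar ρ φ C' := by
  unfold CFAct at h ⊢
  refine not_sat_transfer φ ?_ ?_ ?_ ?_ h
  · rfl
  · rfl
  · intro q u hu i
    obtain ⟨h1, h2⟩ := hu i
    exact ⟨h1, fun δ a hq hπ hc' => h2 δ a hq hπ fun hc => hc' (hsub hc)⟩
  · exact clkCont_transfer _ _ _ (network_transfer bar fun i =>
      interS_transfer _ (cta_transfer AP _ (fun e he => hsub he) _ _ _))
end

section
/- CF_BF implies CF_Act: for every network of timed automata A^n, lasso-shaped run ρ, MITL effect φ, and finite set of events C ⊆ E(A^n), if C fulfills CF_BF, i.e., (A1 ∩ A^{C|1}_{ρ(A1)}) || … || (An ∩ A^{C|n}_{ρ(An)}) ⊭ φ, then C fulfills CF_Act, i.e., ((A1^{loc(ρ)} ∩ A^{C|1}_{ρ(A1)}) || … || (An^{loc(ρ)} ∩ A^{C|n}_{ρ(An)}))^{clk(ρ)} ⊭ φ. -/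
open scoped Classical

section Aux

private lemma dstIdx_lt {s l j : ℕ} (h : s < l) : dstIdx s l j < l := by
  unfold dstIdx; split <;> omega

/-- A run of `interS (liftTA B K) (CTA …)` can be mimicked, edge by edge, in
`interS (liftTA (locContingency B seq s l) K) (CTA …)` by duplicating the
CTA position into the location contingency index. -/
private lemma comp_edge_map {Loc Act X AP K : Type} (B : TA Loc Act X AP) (seq : ℕ → Loc)
    (π : TATrace Act) (Cs : Set (TAEvent Act)) (s l : ℕ) (d : X ⊕ K)
    (e : TAEdge (Loc × ℕ) Act (X ⊕ K))
    (he : e ∈ (interS (liftTA B K) (CTA AP π Cs s l d)).edges) :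
    (⟨(e.src, e.src.2), e.guard, e.act, e.upd, (e.dst, e.dst.2)⟩ :
      TAEdge ((Loc × ℕ) × ℕ) Act (X ⊕ K)) ∈
      (interS (liftTA (locContingency B seq s l) K) (CTA AP π Cs s l d)).edges := by
  obtain ⟨ea, hea, eb, heb, ha1, ha2, hs, hd, hg, hu⟩ := he
  obtain ⟨e0, he0, hs0, hd0, hac0, hg0, hu0⟩ := hea
  obtain ⟨j, hj, δ, a, hπ, hbs, hbd, hbu, hbg, hba⟩ := heb
  refine ⟨⟨((e0.src, j) : Loc × ℕ), ea.guard, ea.act, ea.upd, ((e0.dst, dstIdx s l j) : Loc × ℕ)⟩,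
    ⟨⟨((e0.src, j) : Loc × ℕ), e0.guard, e0.act, e0.upd, ((e0.dst, dstIdx s l j) : Loc × ℕ)⟩,
      ⟨e0, he0, j, hj, rfl, rfl, rfl, rfl, Or.inl rfl⟩, rfl, rfl, hac0, hg0, hu0⟩,
    eb, ⟨j, hj, δ, a, hπ, hbs, hbd, hbu, hbg, hba⟩, ha1, ha2, ?_, ?_, hg, hu⟩
  · simp [hs, hs0, hbs]
  · simp [hd, hd0, hbd]

/-- Network edges are preserved by any family of edge-preserving location maps. -/
private lemma network_edge_map {n : ℕ} {L1 L2 Act X AP : Type}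
    (B : Fin n → TA L1 Act X AP) (B' : Fin n → TA L2 Act X AP) (bar : Act → Act)
    (f : L1 → L2)
    (hf : ∀ i, ∀ e ∈ (B i).edges,
      (⟨f e.src, e.guard, e.act, e.upd, f e.dst⟩ : TAEdge L2 Act X) ∈ (B' i).edges)
    (e : TAEdge (Fin n → L1) (NetAct n Act) X)
    (he : e ∈ (Network B bar).edges) :
    (⟨fun i => f (e.src i), e.guard, e.act, e.upd, fun i => f (e.dst i)⟩ :
      TAEdge (Fin n → L2) (NetAct n Act) X) ∈ (Network B' bar).edges := by
  rcases he with ⟨i, e', he', hact, hg, hu, hsi, hdi, hrest⟩ |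
    ⟨i, j, hij, ei, hei, ej, hej, hbar, hact, hg, hu, hsi, hsj, hdi, hdj, hrest⟩
  · exact Or.inl ⟨i, _, hf i e' he', hact, hg, hu, by simp [hsi], by simp [hdi],
      fun k hk => by simp [hrest k hk]⟩
  · exact Or.inr ⟨i, j, hij, _, hf i ei hei, _, hf j ej hej, hbar, hact, hg, hu,
      by simp [hsi], by simp [hsj], by simp [hdi], by simp [hdj],
      fun k hki hkj => by simp [hrest k hki hkj]⟩

end Aux

/-- CF_BF implies CF_Act. -/
theorem CFBF_implies_CFAct {n : ℕ} {Loc Act X AP : Type}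
    [Finite Loc] [Finite Act] [Finite X] [Finite AP]
    (A : Fin n → TA Loc Act X AP) (bar : Act → Act)
    (ρ : LassoRun (Network A bar)) (φ : MITL AP)
    (C : Set (NetEvent n Act)) (hC : C.Finite) (h : CFBF A bar ρ φ C) :
    CFAct A bar ρ φ C := by
  intro hsat
  apply h
  intro σ
  -- the global position counter along the lasso
  let g : ℕ → ℕ := fun t => Nat.rec 0 (fun _ j => dstIdx ρ.start ρ.len j) t
  have hglt : ∀ t, g t < ρ.len := by
    intro t
    induction t with
    | zero => exact Nat.lt_of_le_of_lt (Nat.zero_le _) ρ.start_lt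
    | succ t ih => exact dstIdx_lt ρ.start_lt
  -- the mimicking run of the contingency network
  let σ' : TARun (cfActNetwork A bar ρ C) :=
  { loc := fun t => (fun i => ((σ.loc t i : Loc × ℕ), (σ.loc t i).2), g t)
    clk := σ.clk
    delay := σ.delay
    act := σ.act
    init_loc := by
      refine Prod.ext ?_ rfl
      show (fun i => ((σ.loc 0 i : Loc × ℕ), (σ.loc 0 i).2)) = _
      rw [σ.init_loc]
      rfl
    init_clk := σ.init_clk
    step := by
      intro t
      obtain ⟨e, he, hes, hea, hed, hinv1, hgd, hclk, hinv2⟩ := σ.step t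
      refine ⟨⟨((fun i => ((e.src i : Loc × ℕ), (e.src i).2)), g t), e.guard, e.act, e.upd,
        ((fun i => ((e.dst i : Loc × ℕ), (e.dst i).2)), g (t + 1))⟩,
        ⟨_, network_edge_map _ _ bar (fun p => (p, p.2))
          (fun i e' he' => comp_edge_map (A i) (locSeq ρ.toTARun i)
            (localProj bar ρ.toTARun i) (restrictC C i)
            (localStart ρ i) (localLen ρ i) (Sum.inr i) e' he') e he,
          g t, hglt t, rfl, rfl, rfl, rfl, Or.inl rfl⟩,
        ?_, hea, ?_, ?_, hgd, hclk, ?_⟩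
      · show (_, g t) = (_, g t)
        rw [hes]
      · show (_, g (t + 1)) = (_, g (t + 1))
        rw [hed]
      · exact hinv1
      · exact hinv2 }
  have hcd : ∀ i, cumDelay σ' i = cumDelay σ i := by
    intro i
    induction i with
    | zero => rfl
    | succ i ih => show cumDelay σ' i + σ'.delay i = cumDelay σ i + σ.delay i; rw [ih]
  have hsig : σ'.signal = σ.signal := by
    funext t
    ext p
    constructor
    · rintro ⟨i, h1, h2, h3⟩
      exact ⟨i, by rwa [hcd] at h1, by rwa [hcd] at h2, h3⟩
    · rintro ⟨i, h1, h2, h3⟩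
      exact ⟨i, by rwa [← hcd] at h1, by rwa [← hcd] at h2, h3⟩
  have hs := hsat σ'
  unfold TARun.sat at hs ⊢
  rwa [hsig] at hs
end

section
/- Every but-for cause contains an actual cause: for every network of timed automata A^n, lasso-shaped run ρ, and MITL effect φ, if C is a but-for cause for φ in ρ of A^n, then there exists an actual cause C' for φ in ρ of A^n with C' ⊆ C. -/
open scoped Classical

noncomputable section

/-- The lasso-position tracker for the outer clock-contingency automaton. -/
def posRec (s l : ℕ) (t : ℕ) : ℕ := Nat.rec 0 (fun _ p => dstIdx s l p) t

lemma posRec_lt (s l : ℕ) (h : s < l) : ∀ t, posRec s l t < l := by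
  intro t
  induction t with
  | zero => exact Nat.lt_of_le_of_lt (Nat.zero_le s) h
  | succ t ih =>
    show dstIdx s l (posRec s l t) < l
    unfold dstIdx
    split
    · assumption
    · exact h

/-- Lifting a component edge of the counterfactual network to a component edge
of the counterfactual network with location contingencies. -/
lemma comp_edge_lift {Loc Act X K AP : Type}
    (B : TA Loc Act X AP) (π : TATrace Act) (Ci : Set (TAEvent Act))
    (seq : ℕ → Loc) (s l : ℕ) (d : X ⊕ K)
    (ec : TAEdge (Loc × ℕ) Act (X ⊕ K))
    (hec : ec ∈ (interS (liftTA B K) (CTA AP π Ci s l d)).edges) :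
    ({ src := (ec.src, ec.src.2), guard := ec.guard, act := ec.act, upd := ec.upd,
       dst := (ec.dst, ec.dst.2) } : TAEdge ((Loc × ℕ) × ℕ) Act (X ⊕ K)) ∈
    (interS (liftTA (locContingency B seq s l) K) (CTA AP π Ci s l d)).edges := by
  obtain ⟨ea, hea, eb, heb, hact1, hact2, hsrc, hdst, hg, hu⟩ := hec
  obtain ⟨ea0, hea0, hs0, hd0, ha0, hg0, hu0⟩ := hea
  obtain ⟨j, hj, δ, a, hπ, hebs, hebd, -⟩ := id heb
  refine ⟨{ src := ec.src, guard := ea.guard, act := ea.act, upd := ea.upd, dst := ec.dst },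
    ?_, eb, heb, hact1, hact2, ?_, ?_, ?_, ?_⟩
  · refine ⟨{ src := (ea0.src, j), guard := ea0.guard, act := ea0.act, upd := ea0.upd,
              dst := (ea0.dst, dstIdx s l j) },
            ⟨ea0, hea0, j, hj, rfl, rfl, rfl, rfl, Or.inl rfl⟩, ?_, ?_, ha0, hg0, hu0⟩
    · rw [hsrc, hs0, hebs]
    · rw [hdst, hd0, hebd]
  · rw [hsrc]
  · rw [hdst]
  · exact hg
  · exact hu

/-- Lifting a network edge of the counterfactual network to the counterfactual
network with location contingencies. -/
lemma edge_lift {n : ℕ} {Loc Act X AP : Type}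
    (A : Fin n → TA Loc Act X AP) (bar : Act → Act)
    (ρ : LassoRun (Network A bar)) (C : Set (NetEvent n Act))
    (e : TAEdge (Fin n → Loc × ℕ) (NetAct n Act) (X ⊕ Fin n))
    (he : e ∈ (cfNetwork A bar ρ C).edges) :
    ({ src := fun i => (e.src i, (e.src i).2), guard := e.guard, act := e.act,
       upd := e.upd, dst := fun i => (e.dst i, (e.dst i).2) } :
      TAEdge (Fin n → (Loc × ℕ) × ℕ) (NetAct n Act) (X ⊕ Fin n)) ∈
    (Network (fun i =>
      interS
        (liftTA (locContingency (A i) (locSeq ρ.toTARun i) (localStart ρ i) (localLen ρ i))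
          (Fin n))
        (CTA AP (localProj bar ρ.toTARun i) (restrictC C i)
          (localStart ρ i) (localLen ρ i) (Sum.inr i))) bar).edges := by
  rcases he with ⟨i, ec, hec, hact, hg, hu, hsi, hdi, hoth⟩ |
    ⟨i, j, hij, ei, hei, ej, hej, hbar, hact, hg, hu, hsi, hsj, hdi, hdj, hoth⟩
  · left
    refine ⟨i, _, comp_edge_lift (A i) _ _ (locSeq ρ.toTARun i) _ _ _ ec hec,
      hact, hg, hu, ?_, ?_, ?_⟩
    · show (e.src i, (e.src i).2) = _; rw [hsi]
    · show (e.dst i, (e.dst i).2) = _; rw [hdi]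
    · intro k hk
      show (e.dst k, (e.dst k).2) = (e.src k, (e.src k).2)
      rw [hoth k hk]
  · right
    refine ⟨i, j, hij, _, comp_edge_lift (A i) _ _ (locSeq ρ.toTARun i) _ _ _ ei hei,
      _, comp_edge_lift (A j) _ _ (locSeq ρ.toTARun j) _ _ _ ej hej,
      hbar, hact, hg, hu, ?_, ?_, ?_, ?_, ?_⟩
    · show (e.src i, (e.src i).2) = _; rw [hsi]
    · show (e.src j, (e.src j).2) = _; rw [hsj]
    · show (e.dst i, (e.dst i).2) = _; rw [hdi]
    · show (e.dst j, (e.dst j).2) = _; rw [hdj]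
    · intro k hki hkj
      show (e.dst k, (e.dst k).2) = (e.src k, (e.src k).2)
      rw [hoth k hki hkj]

/-- Every run of the counterfactual network induces a run of the counterfactual
network with contingencies (using only non-contingency edges). -/
def liftRun {n : ℕ} {Loc Act X AP : Type}
    (A : Fin n → TA Loc Act X AP) (bar : Act → Act)
    (ρ : LassoRun (Network A bar)) (C : Set (NetEvent n Act))
    (τ : TARun (cfNetwork A bar ρ C)) : TARun (cfActNetwork A bar ρ C) where
  loc t := (fun i => (τ.loc t i, (τ.loc t i).2), posRec ρ.start ρ.len t)
  clk := τ.clk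
  delay := τ.delay
  act := τ.act
  init_loc := by
    have h := τ.init_loc
    simp only [h]
    rfl
  init_clk := τ.init_clk
  step := by
    intro t
    obtain ⟨e, he, hs, ha, hd, hi1, hg, hc, hi2⟩ := τ.step t
    refine ⟨{ src := (fun i => (τ.loc t i, (τ.loc t i).2), posRec ρ.start ρ.len t),
              guard := e.guard, act := e.act, upd := e.upd,
              dst := (fun i => (τ.loc (t+1) i, (τ.loc (t+1) i).2),
                posRec ρ.start ρ.len (t+1)) },
            ?_, rfl, ha, rfl, hi1, hg, hc, hi2⟩
    refine ⟨{ src := fun i => (τ.loc t i, (τ.loc t i).2), guard := e.guard, act := e.act,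
              upd := e.upd, dst := fun i => (τ.loc (t+1) i, (τ.loc (t+1) i).2) },
            ?_, posRec ρ.start ρ.len t, posRec_lt _ _ ρ.start_lt t, rfl, rfl, rfl, rfl,
            Or.inl rfl⟩
    rw [← hs, ← hd]
    exact edge_lift A bar ρ C e he

lemma liftRun_cumDelay {n : ℕ} {Loc Act X AP : Type}
    (A : Fin n → TA Loc Act X AP) (bar : Act → Act)
    (ρ : LassoRun (Network A bar)) (C : Set (NetEvent n Act))
    (τ : TARun (cfNetwork A bar ρ C)) :
    ∀ i, cumDelay (liftRun A bar ρ C τ) i = cumDelay τ i := by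
  intro i
  induction i with
  | zero => rfl
  | succ i ih => simp only [cumDelay, ih]; rfl

lemma liftRun_signal {n : ℕ} {Loc Act X AP : Type}
    (A : Fin n → TA Loc Act X AP) (bar : Act → Act)
    (ρ : LassoRun (Network A bar)) (C : Set (NetEvent n Act))
    (τ : TARun (cfNetwork A bar ρ C)) :
    (liftRun A bar ρ C τ).signal = τ.signal := by
  funext t
  ext p
  simp only [TARun.signal, Set.mem_setOf_eq, liftRun_cumDelay]
  constructor
  · rintro ⟨i, h1, h2, h3⟩
    exact ⟨i, h1, h2, h3⟩
  · rintro ⟨i, h1, h2, h3⟩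
    exact ⟨i, h1, h2, h3⟩

lemma cfAct_of_cfBF {n : ℕ} {Loc Act X AP : Type}
    (A : Fin n → TA Loc Act X AP) (bar : Act → Act)
    (ρ : LassoRun (Network A bar)) (φ : MITL AP)
    (C : Set (NetEvent n Act)) (h : CFBF A bar ρ φ C) : CFAct A bar ρ φ C := by
  intro hs
  apply h
  intro τ
  show MITL.sat τ.signal φ 0
  rw [← liftRun_signal A bar ρ C τ]
  exact hs (liftRun A bar ρ C τ)

end

/-- every but-for cause contains an actual cause. -/
theorem butfor_contains_actual {n : ℕ} {Loc Act X AP : Type}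
    [Finite Loc] [Finite Act] [Finite X] [Finite AP]
    (A : Fin n → TA Loc Act X AP) (bar : Act → Act)
    (ρ : LassoRun (Network A bar)) (φ : MITL AP)
    (C : Set (NetEvent n Act)) (h : IsButForCause A bar ρ φ C) :
    ∃ C' : Set (NetEvent n Act), C' ⊆ C ∧ IsActualCause A bar ρ φ C' := by
  obtain ⟨hfin, hsatC, hbf, hmin⟩ := h
  have hact : CFAct A bar ρ φ C := cfAct_of_cfBF A bar ρ φ C hbf
  have hTne : (Set.Nonempty {k | ∃ C' ⊆ C, CFAct A bar ρ φ C' ∧ C'.ncard = k}) :=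
    ⟨C.ncard, C, subset_rfl, hact, rfl⟩
  obtain ⟨C', hsub, hC'act, hcard⟩ := Nat.sInf_mem hTne
  refine ⟨C', hsub, hfin.subset hsub, ⟨hsub.trans hsatC.1, hsatC.2⟩, hC'act, ?_⟩
  rintro C'' hss ⟨-, hact''⟩
  have hmem : C''.ncard ∈ {k | ∃ C' ⊆ C, CFAct A bar ρ φ C' ∧ C'.ncard = k} :=
    ⟨C'', hss.subset.trans hsub, hact'', rfl⟩
  have hle := Nat.sInf_le hmem
  have hlt : C''.ncard < C'.ncard := Set.ncard_lt_ncard hss (hfin.subset hsub)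
  omega
end
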